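/- If f : x → y is an isomorphism in an H*-category, then f = a∘u where a : x → x is self-adjoint (a∗ = a) and u : x → y is unitary (u∘u∗ = 1_x and u∗∘u = 1_y). -/

import Mathlib

open CategoryTheory

/-- An H*-category: a category enriched over (finite-dimensional) Hilbert spaces,
with bilinear composition and antilinear star maps `∗ : hom(x,y) → hom(y,x)`
satisfying `f∗∗ = f`, `(fg)∗ = g∗f∗`, `⟪fg,h⟫ = ⟪g, f∗h⟫` and `⟪fg,h⟫ = ⟪f, hg∗⟫`. -/
class HStarCategory (C : Type*) [Category C]
    [∀ x y : C, NormedAddCommGroup (x ⟶ y)]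
    [∀ x y : C, InnerProductSpace ℂ (x ⟶ y)] where
  star : ∀ {x y : C}, (x ⟶ y) → (y ⟶ x)
  star_id : ∀ x : C, star (𝟙 x) = 𝟙 x
  star_star : ∀ {x y : C} (f : x ⟶ y), star (star f) = f
  star_comp : ∀ {x y z : C} (f : x ⟶ y) (g : y ⟶ z), star (f ≫ g) = star g ≫ star f
  star_add : ∀ {x y : C} (f g : x ⟶ y), star (f + g) = star f + star g
  star_smul : ∀ {x y : C} (c : ℂ) (f : x ⟶ y), star (c • f) = (starRingEnd ℂ) c • star f
  comp_add : ∀ {x y z : C} (f : x ⟶ y) (g g' : y ⟶ z), f ≫ (g + g') = f ≫ g + f ≫ g'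
  add_comp : ∀ {x y z : C} (f f' : x ⟶ y) (g : y ⟶ z), (f + f') ≫ g = f ≫ g + f' ≫ g
  comp_smul : ∀ {x y z : C} (f : x ⟶ y) (c : ℂ) (g : y ⟶ z), f ≫ (c • g) = c • (f ≫ g)
  smul_comp : ∀ {x y z : C} (c : ℂ) (f : x ⟶ y) (g : y ⟶ z), (c • f) ≫ g = c • (f ≫ g)
  inner_comp_left : ∀ {x y z : C} (f : x ⟶ y) (g : y ⟶ z) (h : x ⟶ z),
    @inner ℂ _ _ (f ≫ g) h = @inner ℂ _ _ g (star f ≫ h)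
  inner_comp_right : ∀ {x y z : C} (f : x ⟶ y) (g : y ⟶ z) (h : x ⟶ z),
    @inner ℂ _ _ (f ≫ g) h = @inner ℂ _ _ f (h ≫ star g)

section PolarAux

open HStarCategory Polynomial

variable {C : Type*} [Category C]
    [∀ x y : C, NormedAddCommGroup (x ⟶ y)]
    [∀ x y : C, InnerProductSpace ℂ (x ⟶ y)]
    [HStarCategory C]

private lemma HStarCategory.exists_selfadjoint_sq {x y : C}
    [FiniteDimensional ℂ (x ⟶ x)] (f : x ⟶ y) :
    ∃ a : x ⟶ x, HStarCategory.star a = a ∧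
      a ≫ a = f ≫ HStarCategory.star f := by
  classical
  haveI : CompleteSpace (x ⟶ x) := FiniteDimensional.complete ℂ _
  obtain ⟨p, hp_def⟩ : ∃ p : x ⟶ x, p = f ≫ star f := ⟨_, rfl⟩
  have hp : star p = p := by rw [hp_def, star_comp, star_star]
  -- left multiplication by `p` as a linear endomorphism
  set T : (x ⟶ x) →ₗ[ℂ] (x ⟶ x) :=
    { toFun := fun g => p ≫ g
      map_add' := fun g h => comp_add p g h
      map_smul' := fun c g => comp_smul p c g } with hT_def
  have hTapp : ∀ g : x ⟶ x, T g = p ≫ g := fun g => rfl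
  have hT : T.IsSymmetric := by
    intro g h
    show (inner ℂ (p ≫ g) h : ℂ) = inner ℂ g (p ≫ h)
    rw [inner_comp_left, hp]
  set n := Module.finrank ℂ (x ⟶ x) with hn_def
  have hn : Module.finrank ℂ (x ⟶ x) = n := rfl
  set b := hT.eigenvectorBasis hn with hb_def
  set μ := hT.eigenvalues hn with hμ_def
  have hbe : ∀ i, T (b i) = (μ i : ℂ) • b i := fun i => hT.apply_eigenvectorBasis hn i
  have hμ0 : ∀ i, 0 ≤ μ i := by
    intro i
    have h1 : (inner ℂ (T (b i)) (b i) : ℂ) = (μ i : ℂ) := by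
      rw [hbe i, inner_smul_left]
      have hb1 : (inner ℂ (b i) (b i) : ℂ) = 1 := by
        rw [inner_self_eq_norm_sq_to_K, b.orthonormal.1 i]
        norm_num
      rw [hb1, Complex.conj_ofReal, mul_one]
    have h2 : (inner ℂ (T (b i)) (b i) : ℂ)
        = inner ℂ (star f ≫ b i) (star f ≫ b i) := by
      rw [hTapp, hp_def, Category.assoc, inner_comp_left]
    have h3 : (μ i : ℂ) = ((‖star f ≫ b i‖ : ℂ)) ^ 2 := by
      rw [← h1, h2, inner_self_eq_norm_sq_to_K]
      norm_cast
    have h4 : μ i = ‖star f ≫ b i‖ ^ 2 := by exact_mod_cast h3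
    rw [h4]; positivity
  -- interpolation polynomial for the square root
  set s : Finset ℝ := Finset.image μ Finset.univ with hs_def
  set q : ℝ[X] := Lagrange.interpolate s id Real.sqrt with hq_def
  have hq : ∀ i, q.eval (μ i) = Real.sqrt (μ i) := by
    intro i
    have := Lagrange.eval_interpolate_at_node Real.sqrt
      (Set.injOn_id (s : Set ℝ)) (Finset.mem_image_of_mem μ (Finset.mem_univ i))
    simpa [hq_def] using this
  set q' : ℂ[X] := q.map (algebraMap ℝ ℂ) with hq'_def
  have hq'eval : ∀ i, q'.eval ((μ i : ℂ)) = ((Real.sqrt (μ i) : ℝ) : ℂ) := by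
    intro i
    rw [hq'_def, Polynomial.eval_map]
    have : ((μ i : ℂ)) = algebraMap ℝ ℂ (μ i) := rfl
    rw [this, eval₂_at_apply, hq]
    simp [Complex.coe_algebraMap]
  set S : Module.End ℂ (x ⟶ x) := Polynomial.aeval T q' with hS_def
  -- action of polynomials of T on the eigenbasis
  have hpow : ∀ (k : ℕ) (i : Fin n), (T ^ k) (b i) = ((μ i : ℂ) ^ k) • b i := by
    intro k i
    induction k with
    | zero => simp
    | succ k ih =>
      rw [pow_succ, Module.End.mul_apply, hbe, map_smul, ih, smul_smul, ← pow_succ']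
  have haeval : ∀ (r : ℂ[X]) (i : Fin n),
      (Polynomial.aeval T r) (b i) = (r.eval ((μ i : ℂ))) • b i := by
    intro r i
    induction r using Polynomial.induction_on' with
    | add r₁ r₂ h₁ h₂ =>
      rw [map_add, LinearMap.add_apply, h₁, h₂, eval_add, add_smul]
    | monomial k c =>
      rw [aeval_monomial, eval_monomial, Module.End.mul_apply, hpow,
        Module.algebraMap_end_apply, smul_smul]
  have hSS : S * S = T := by
    apply b.toBasis.ext
    intro i
    rw [OrthonormalBasis.coe_toBasis, Module.End.mul_apply, hS_def, haeval, map_smul,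
      haeval, hbe, smul_smul, hq'eval]
    norm_cast
    rw [Real.mul_self_sqrt (hμ0 i)]
  set a : x ⟶ x := S (𝟙 x) with ha_def
  -- `S` is left multiplication by `a`
  have hL : ∀ g : x ⟶ x, S g = a ≫ g := by
    intro g
    set R : Module.End ℂ (x ⟶ x) :=
      { toFun := fun h => h ≫ g
        map_add' := fun h h' => add_comp h h' g
        map_smul' := fun c h => smul_comp c h g } with hR_def
    have hcomm : Commute T R := by
      apply LinearMap.ext
      intro h
      show p ≫ (h ≫ g) = (p ≫ h) ≫ g
      rw [Category.assoc]
      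
    have hScomm : Commute T S :=
      Algebra.commute_of_mem_adjoin_self (aeval_mem_adjoin_singleton ℂ T)
    have hcS : Commute S R :=
      Algebra.commute_of_mem_adjoin_singleton_of_commute
        (aeval_mem_adjoin_singleton ℂ T) hcomm.symm |>.symm
    have h1 : S (R (𝟙 x)) = R (S (𝟙 x)) := by
      rw [← Module.End.mul_apply, ← Module.End.mul_apply, hcS.eq]
    have h2 : R (𝟙 x) = g := Category.id_comp g
    have h3 : R (S (𝟙 x)) = a ≫ g := rfl
    rw [h2, h3] at h1
    exact h1
  have haa : a ≫ a = p := by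
    calc a ≫ a = S a := (hL a).symm
    _ = (S * S) (𝟙 x) := by rw [Module.End.mul_apply]
    _ = T (𝟙 x) := by rw [hSS]
    _ = p := Category.comp_id p
  -- self-adjointness of a
  have key : ∀ k : ℕ, ((T ^ k) (𝟙 x)) ≫ p = p ≫ ((T ^ k) (𝟙 x)) ∧
      star ((T ^ k) (𝟙 x)) = (T ^ k) (𝟙 x) := by
    intro k
    induction k with
    | zero =>
      constructor
      · simp only [pow_zero, Module.End.one_apply, Category.id_comp, Category.comp_id]
      · simp only [pow_zero, Module.End.one_apply, star_id]
    | succ k ih =>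
      have hsucc : (T ^ (k + 1)) (𝟙 x) = p ≫ ((T ^ k) (𝟙 x)) := by
        rw [pow_succ', Module.End.mul_apply]
        rfl
      constructor
      · rw [hsucc, Category.assoc, ih.1]
      · rw [hsucc, star_comp, hp, ih.2, ih.1]
  have hstar : star a = a := by
    have hsum : a = ∑ i ∈ Finset.range (q'.natDegree + 1),
        q'.coeff i • (T ^ i) (𝟙 x) := by
      rw [ha_def, hS_def, aeval_eq_sum_range, LinearMap.sum_apply]
      simp only [LinearMap.smul_apply]
    set SH : (x ⟶ x) →+ (x ⟶ x) := AddMonoidHom.mk' star (fun f' g' => star_add f' g')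
      with hSH_def
    have : star a = SH a := rfl
    rw [this, hsum, map_sum]
    refine Finset.sum_congr rfl fun i _ => ?_
    have hSHapp : SH (q'.coeff i • (T ^ i) (𝟙 x))
        = (starRingEnd ℂ) (q'.coeff i) • star ((T ^ i) (𝟙 x)) :=
      star_smul _ _
    have hcoeff : (starRingEnd ℂ) (q'.coeff i) = q'.coeff i := by
      rw [hq'_def, coeff_map]
      exact Complex.conj_ofReal _
    rw [hSHapp, hcoeff, (key i).2]
  exact ⟨a, hstar, by rw [haa, hp_def]⟩

end PolarAux

/-- Polar decomposition in an H*-category: every isomorphism `f : x ⟶ y` factors as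
`f = a ≫ u` with `a : x ⟶ x` self-adjoint and `u : x ⟶ y` unitary. -/
theorem HStarCategory.polar_decomposition {C : Type*} [Category C]
    [∀ x y : C, NormedAddCommGroup (x ⟶ y)]
    [∀ x y : C, InnerProductSpace ℂ (x ⟶ y)]
    [∀ x y : C, FiniteDimensional ℂ (x ⟶ y)]
    [HStarCategory C]
    {x y : C} (f : x ⟶ y) (hf : IsIso f) :
    ∃ (a : x ⟶ x) (u : x ⟶ y),
      HStarCategory.star a = a ∧
      u ≫ HStarCategory.star u = 𝟙 x ∧
      HStarCategory.star u ≫ u = 𝟙 y ∧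
      f = a ≫ u := by
  classical
  haveI := hf
  obtain ⟨a, hstar, haa0⟩ := HStarCategory.exists_selfadjoint_sq f
  obtain ⟨p, hp_def⟩ : ∃ p : x ⟶ x, p = f ≫ HStarCategory.star f := ⟨_, rfl⟩
  have haa : a ≫ a = p := by rw [hp_def]; exact haa0
  have hp : HStarCategory.star p = p := by
    rw [hp_def, HStarCategory.star_comp, HStarCategory.star_star]
  haveI hsf : IsIso (HStarCategory.star f) :=
    ⟨HStarCategory.star (inv f),
      by rw [← HStarCategory.star_comp, IsIso.inv_hom_id, HStarCategory.star_id],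
      by rw [← HStarCategory.star_comp, IsIso.hom_inv_id, HStarCategory.star_id]⟩
  haveI hpI : IsIso p := by rw [hp_def]; infer_instance
  have h1 : HStarCategory.star (inv p) ≫ p = 𝟙 x := by
    have h0 := congrArg HStarCategory.star (IsIso.hom_inv_id p)
    rw [HStarCategory.star_comp, HStarCategory.star_id] at h0
    rwa [hp] at h0
  have hinvp : HStarCategory.star (inv p) = inv p := by
    calc HStarCategory.star (inv p)
        = HStarCategory.star (inv p) ≫ (p ≫ inv p) := by
          rw [IsIso.hom_inv_id, Category.comp_id]
    _ = (HStarCategory.star (inv p) ≫ p) ≫ inv p := by rw [Category.assoc]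
    _ = inv p := by rw [h1, Category.id_comp]
  have hpa : p ≫ a = a ≫ p := by
    rw [← haa, Category.assoc]
  have hcomm : a ≫ inv p = inv p ≫ a := by
    calc a ≫ inv p = (inv p ≫ p) ≫ (a ≫ inv p) := by
          rw [IsIso.inv_hom_id, Category.id_comp]
    _ = inv p ≫ (p ≫ a) ≫ inv p := by simp only [Category.assoc]
    _ = inv p ≫ (a ≫ p) ≫ inv p := by rw [hpa]
    _ = inv p ≫ a ≫ (p ≫ inv p) := by simp only [Category.assoc]
    _ = inv p ≫ a := by rw [IsIso.hom_inv_id, Category.comp_id]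
  set u : x ⟶ y := (a ≫ inv p) ≫ f with hu_def
  have hstaru : HStarCategory.star u = HStarCategory.star f ≫ inv p ≫ a := by
    rw [hu_def, HStarCategory.star_comp, HStarCategory.star_comp, hinvp, hstar]
  have hfold : ∀ {z : C} (w : x ⟶ z),
      f ≫ HStarCategory.star f ≫ w = p ≫ w := by
    intro z w; rw [← Category.assoc, ← hp_def]
  have hafold : ∀ {z : C} (w : x ⟶ z), a ≫ a ≫ w = p ≫ w := by
    intro z w; rw [← Category.assoc, haa]
  have goal1 : u ≫ HStarCategory.star u = 𝟙 x := by
    calc u ≫ HStarCategory.star u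
        = a ≫ inv p ≫ f ≫ HStarCategory.star f ≫ inv p ≫ a := by
          rw [hu_def, hstaru]; simp only [Category.assoc]
    _ = a ≫ inv p ≫ p ≫ inv p ≫ a := by rw [hfold]
    _ = a ≫ inv p ≫ a := by rw [IsIso.hom_inv_id_assoc]
    _ = (inv p ≫ a) ≫ a := by rw [← Category.assoc, hcomm]
    _ = inv p ≫ p := by rw [Category.assoc, haa]
    _ = 𝟙 x := IsIso.inv_hom_id p
  have goal2 : HStarCategory.star u ≫ u = 𝟙 y := by
    calc HStarCategory.star u ≫ u
        = HStarCategory.star f ≫ inv p ≫ a ≫ a ≫ inv p ≫ f := by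
          rw [hu_def, hstaru]; simp only [Category.assoc]
    _ = HStarCategory.star f ≫ inv p ≫ p ≫ inv p ≫ f := by rw [hafold]
    _ = HStarCategory.star f ≫ inv p ≫ f := by rw [IsIso.hom_inv_id_assoc]
    _ = 𝟙 y := by
          have hinv : inv p = inv (HStarCategory.star f) ≫ inv f := by
            apply IsIso.inv_eq_of_hom_inv_id
            rw [hp_def]
            simp
          rw [hinv]
          simp
  have goal3 : f = a ≫ u := by
    rw [hu_def, ← Category.assoc, ← Category.assoc, haa, Category.assoc,
      IsIso.hom_inv_id_assoc]
  exact ⟨a, u, hstar, goal1, goal2, goal3⟩
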